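/- arXiv:2003.12899 — 8 statements merged into one kernel-verified Lean document; each statement's English description precedes it below -/
import Mathlib

section
/- Let X be a real vector space and let Ω₁, Ω₂ ⊆ X be convex sets with Ω₁ ∩ Ω₂ ≠ ∅ satisfying the qualification condition core(Ω₁) ∩ Ω₂ ≠ ∅. Then for every point x̄ ∈ Ω₁ ∩ Ω₂ one has the normal cone intersection rule N(x̄; Ω₁ ∩ Ω₂) = N(x̄; Ω₁) + N(x̄; Ω₂), where the sum is the Minkowski sum of the two sets of linear functions. -/
open Pointwise Set

/-- Algebraic core (algebraic interior) of a set in a real vector space. -/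
def algCore {X : Type*} [AddCommGroup X] [Module ℝ X] (Ω : Set X) : Set X :=
  {x | x ∈ Ω ∧ ∀ v : X, ∃ δ : ℝ, 0 < δ ∧ ∀ t : ℝ, |t| < δ → x + t • v ∈ Ω}

/-- Normal cone to a convex set `Ω` at `xbar`, consisting of linear functionals. -/
def normalCone {X : Type*} [AddCommGroup X] [Module ℝ X] (xbar : X) (Ω : Set X) :
    Set (X →ₗ[ℝ] ℝ) :=
  {f | ∀ x ∈ Ω, f (x - xbar) ≤ 0}

/-- Extremal system of two sets in a vector space. -/
def IsExtremal {X : Type*} [AddCommGroup X] [Module ℝ X] (Ω₁ Ω₂ : Set X) : Prop :=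
  ∃ x₀ : X, ∀ δ : ℝ, 0 < δ → ∃ t₀ : ℝ, |t₀| < δ ∧
    ((fun w => w + t₀ • x₀) '' Ω₁) ∩ Ω₂ = ∅

/-- Domain of a set-valued mapping. -/
def svDom {X Y : Type*} (F : X → Set Y) : Set X := {x | (F x).Nonempty}

/-- Graph of a set-valued mapping. -/
def svGraph {X Y : Type*} (F : X → Set Y) : Set (X × Y) := {p | p.2 ∈ F p.1}

/-- Coderivative of a set-valued mapping `F` at `(xbar, ybar) ∈ gph F` applied to a linear
functional `g`: the set of linear `f` with `(f, -g)` in the normal cone to the graph. -/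
def coderiv {X Y : Type*} [AddCommGroup X] [Module ℝ X] [AddCommGroup Y] [Module ℝ Y]
    (F : X → Set Y) (xbar : X) (ybar : Y) (g : Y →ₗ[ℝ] ℝ) : Set (X →ₗ[ℝ] ℝ) :=
  {f | ∀ x : X, ∀ y ∈ F x, f (x - xbar) - g (y - ybar) ≤ 0}

/-- Subdifferential (of linear functionals) of an extended-real-valued function. -/
def subdiff {X : Type*} [AddCommGroup X] [Module ℝ X] (φ : X → EReal) (xbar : X) :
    Set (X →ₗ[ℝ] ℝ) :=
  {f | ∀ x : X, φ xbar + (f (x - xbar) : EReal) ≤ φ x}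

/-- Effective domain of an extended-real-valued function with values in `ℝ ∪ {+∞}`. -/
def fDom {X : Type*} (φ : X → EReal) : Set X := {x | φ x < ⊤}

/-- Epigraph of an extended-real-valued function. -/
def epi {X : Type*} (φ : X → EReal) : Set (X × ℝ) := {p | φ p.1 ≤ (p.2 : EReal)}

/-- Convexity of an extended-real-valued function (with values in `ℝ ∪ {+∞}`). -/
def ConvexFun {X : Type*} [AddCommGroup X] [Module ℝ X] (φ : X → EReal) : Prop :=
  ∀ x y : X, ∀ t : ℝ, 0 ≤ t → t ≤ 1 →
    φ (t • x + (1 - t) • y) ≤ (t : EReal) * φ x + ((1 - t : ℝ) : EReal) * φ y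

/-- Composition of set-valued mappings. -/
def svComp {X Y Z : Type*} (G : Y → Set Z) (F : X → Set Y) : X → Set Z :=
  fun x => ⋃ y ∈ F x, G y

/-- The linear functional on `X × Y` identified with a pair `(f, g)` of linear
functionals on `X` and `Y`. -/
def pairFun {X Y : Type*} [AddCommGroup X] [Module ℝ X] [AddCommGroup Y] [Module ℝ Y]
    (f : X →ₗ[ℝ] ℝ) (g : Y →ₗ[ℝ] ℝ) : X × Y →ₗ[ℝ] ℝ :=
  f ∘ₗ LinearMap.fst ℝ X Y + g ∘ₗ LinearMap.snd ℝ X Y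

/-
Given `f` normal to `Ω₁ ∩ Ω₂` at `xbar`, the hypograph of `f` over `Ω₁` and `Ω₂ ×ˢ Ioi (f xbar)`
are disjoint convex subsets of `X × ℝ`, and the hypograph has a core point over any
`w ∈ algCore Ω₁ ∩ Ω₂`. Without a topology they are separated by Hahn–Banach applied to the
Minkowski gauge, which is finite because a core point makes the translated set absorbent. The
separating functional `(g, β)` has `β > 0`, since otherwise it would be bounded above on a set
with a core point; then `f + β⁻¹ g ∈ N(xbar; Ω₁)` and `-β⁻¹ g ∈ N(xbar; Ω₂)`.
-/
open Filter Topology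

section algCore

variable {E F : Type*} [AddCommGroup E] [Module ℝ E] [AddCommGroup F] [Module ℝ F]
  {s t : Set E} {x : E}

theorem mem_algCore_iff : x ∈ algCore s ↔ ∀ v : E, ∀ᶠ τ in 𝓝 (0 : ℝ), x + τ • v ∈ s := by
  simp only [algCore, Metric.eventually_nhds_iff, Real.dist_eq, sub_zero]
  refine ⟨fun h v => h.2 v, fun h => ⟨?_, h⟩⟩
  obtain ⟨δ, hδ, hδs⟩ := h 0
  simpa using hδs (y := 0) (by simpa using hδ)

theorem algCore_mono (hst : s ⊆ t) : algCore s ⊆ algCore t := fun _ hx =>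
  mem_algCore_iff.2 fun v => (mem_algCore_iff.1 hx v).mono fun _ h => hst h

theorem algCore_inter : algCore (s ∩ t) = algCore s ∩ algCore t := by
  refine subset_antisymm (subset_inter (algCore_mono inter_subset_left)
    (algCore_mono inter_subset_right)) fun x ⟨hs, ht⟩ => mem_algCore_iff.2 fun v => ?_
  exact (mem_algCore_iff.1 hs v).and (mem_algCore_iff.1 ht v)

theorem mem_algCore_preimage (φ : E →ₗ[ℝ] F) {s : Set F} (hx : φ x ∈ algCore s) :
    x ∈ algCore (φ ⁻¹' s) :=
  mem_algCore_iff.2 fun v => (mem_algCore_iff.1 hx (φ v)).mono fun _ h => by simpa using h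

theorem mem_algCore_setOf_lt (L : E →ₗ[ℝ] ℝ) {c : ℝ} (hx : L x < c) :
    x ∈ algCore {y | L y < c} := by
  refine mem_algCore_iff.2 fun v => ?_
  have hcont : Tendsto (fun τ : ℝ => L x + τ * L v) (𝓝 0) (𝓝 (L x)) :=
    (by fun_prop : Continuous fun τ : ℝ => L x + τ * L v).tendsto' 0 _ (by simp)
  simpa using hcont.eventually_lt_const hx

theorem sub_mem_algCore_sub {a b : E} (ha : a ∈ algCore s) (hb : b ∈ t) :
    a - b ∈ algCore (s - t) :=
  mem_algCore_iff.2 fun v => (mem_algCore_iff.1 ha v).mono fun _ h =>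
    ⟨_, h, b, hb, add_sub_right_comm _ _ _⟩

theorem absorbent_of_zero_mem_algCore (h : 0 ∈ algCore s) : Absorbent ℝ s :=
  absorbent_iff_eventually_nhdsNE_zero.2 fun v =>
    ((mem_algCore_iff.1 h v).filter_mono nhdsWithin_le_nhds).mono fun _ h => by simpa using h

theorem LinearMap.lt_of_mem_algCore {L : E →ₗ[ℝ] ℝ} (hL : L ≠ 0) {c : ℝ}
    (hs : ∀ y ∈ s, L y ≤ c) (hx : x ∈ algCore s) : L x < c := by
  obtain ⟨v, hv⟩ := LinearMap.surjective_of_ne_zero hL 1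
  obtain ⟨τ, hτs, hτ⟩ :=
    (((mem_algCore_iff.1 hx v).filter_mono nhdsWithin_le_nhds).and
      (self_mem_nhdsWithin (s := Ioi (0 : ℝ)))).exists
  have := hs _ hτs
  simp only [map_add, map_smul, hv, smul_eq_mul, mul_one] at this
  linarith [hτ]

theorem mem_algCore_hypograph (f : E →ₗ[ℝ] ℝ) (hx : x ∈ algCore s) {r : ℝ} (hr : r < f x) :
    (x, r) ∈ algCore {p : E × ℝ | p.1 ∈ s ∧ p.2 ≤ f p.1} := by
  have h₁ : (x, r) ∈ algCore (LinearMap.fst ℝ E ℝ ⁻¹' s) := mem_algCore_preimage _ hx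
  have h₂ : (x, r) ∈ algCore {p | (LinearMap.snd ℝ E ℝ - f ∘ₗ LinearMap.fst ℝ E ℝ) p < 0} :=
    mem_algCore_setOf_lt _ (by simpa using hr)
  refine algCore_mono ?_ (algCore_inter.ge ⟨h₁, h₂⟩)
  rintro p ⟨hp₁, hp₂⟩
  exact ⟨hp₁, (sub_neg.1 hp₂).le⟩

end algCore

section separation

variable {E : Type*} [AddCommGroup E] [Module ℝ E]

theorem exists_linearMap_eq_one_of_zero_mem_algCore {s : Set E} (hs : Convex ℝ s)
    (h₀ : 0 ∈ algCore s) {z : E} (hz : z ∉ s) :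
    ∃ L : E →ₗ[ℝ] ℝ, L z = 1 ∧ ∀ x ∈ s, L x ≤ 1 := by
  have habs := absorbent_of_zero_mem_algCore h₀
  have hz₀ : z ≠ 0 := (ne_of_mem_of_not_mem h₀.1 hz).symm
  let f : E →ₗ.[ℝ] ℝ := LinearPMap.mkSpanSingleton z 1 hz₀
  have hf : ∀ x : f.domain, f x ≤ gauge s x := by
    rintro ⟨x, hx⟩
    obtain ⟨c, rfl⟩ := Submodule.mem_span_singleton.1 hx
    rw [LinearPMap.mkSpanSingleton'_apply, smul_eq_mul, mul_one]
    rcases le_or_gt c 0 with hc | hc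
    · exact hc.trans (gauge_nonneg _)
    · rw [gauge_smul_of_nonneg hc.le, smul_eq_mul]
      exact le_mul_of_one_le_right hc.le
        (one_le_gauge_of_notMem (hs.starConvex h₀.1) (habs z) hz)
  obtain ⟨L, hLf, hL⟩ := exists_extension_of_le_sublinear f (gauge s)
    (fun c hc => gauge_smul_of_nonneg hc.le) (gauge_add_le hs habs) hf
  refine ⟨L, ?_, fun x hx => (hL x).trans (gauge_le_one_of_mem hx)⟩
  exact (hLf ⟨z, Submodule.mem_span_singleton_self z⟩).trans
    (LinearPMap.mkSpanSingleton_apply ℝ ℝ hz₀ 1)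

theorem exists_linearMap_le_of_disjoint {A B : Set E} (hA : Convex ℝ A) (hB : Convex ℝ B)
    {a₀ b₀ : E} (ha₀ : a₀ ∈ algCore A) (hb₀ : b₀ ∈ B) (hAB : Disjoint A B) :
    ∃ L : E →ₗ[ℝ] ℝ, L ≠ 0 ∧ ∀ a ∈ A, ∀ b ∈ B, L a ≤ L b := by
  have h₀ : 0 ∈ algCore (A - B - {a₀ - b₀}) := by
    simpa using sub_mem_algCore_sub (sub_mem_algCore_sub ha₀ hb₀) (mem_singleton (a₀ - b₀))
  have hz : b₀ - a₀ ∉ A - B - {a₀ - b₀} := by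
    rintro ⟨_, ⟨a, ha, b, hb, rfl⟩, _, rfl, hab⟩
    exact disjoint_left.1 hAB ha (by rwa [show a = b by linear_combination (norm := module) hab])
  obtain ⟨L, hL₁, hL⟩ := exists_linearMap_eq_one_of_zero_mem_algCore
    ((hA.sub hB).sub (convex_singleton _)) h₀ hz
  refine ⟨L, fun h => by simp [h] at hL₁, fun a ha b hb => ?_⟩
  have := hL _ (sub_mem_sub (sub_mem_sub ha hb) (mem_singleton (a₀ - b₀)))
  simp only [map_sub] at this hL₁
  linarith

end separation

section normalCone

variable {X : Type*} [AddCommGroup X] [Module ℝ X]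

theorem normalCone_add_normalCone_subset (xbar : X) (Ω₁ Ω₂ : Set X) :
    normalCone xbar Ω₁ + normalCone xbar Ω₂ ⊆ normalCone xbar (Ω₁ ∩ Ω₂) := by
  rintro _ ⟨f₁, hf₁, f₂, hf₂, rfl⟩ x ⟨hx₁, hx₂⟩
  simpa using add_nonpos (hf₁ x hx₁) (hf₂ x hx₂)

theorem exists_linearMap_add_le_of_mem_normalCone_inter {Ω₁ Ω₂ : Set X}
    (h₁ : Convex ℝ Ω₁) (h₂ : Convex ℝ Ω₂) {w : X} (hw₁ : w ∈ algCore Ω₁) (hw₂ : w ∈ Ω₂)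
    {xbar : X} (hxbar : xbar ∈ Ω₁ ∩ Ω₂) {f : X →ₗ[ℝ] ℝ} (hf : f ∈ normalCone xbar (Ω₁ ∩ Ω₂)) :
    ∃ h : X →ₗ[ℝ] ℝ, ∀ x₁ ∈ Ω₁, ∀ x₂ ∈ Ω₂, f x₁ + h x₁ ≤ f xbar + h x₂ := by
  set Θ₁ : Set (X × ℝ) := {p | p.1 ∈ Ω₁ ∧ p.2 ≤ f p.1}
  set Θ₂ : Set (X × ℝ) := Ω₂ ×ˢ Ioi (f xbar)
  have hΘ : Disjoint Θ₁ Θ₂ := by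
    refine disjoint_left.2 fun p ⟨hp₁, hpf⟩ ⟨hp₂, hpx⟩ => ?_
    have := hf p.1 ⟨hp₁, hp₂⟩
    rw [map_sub] at this
    linarith [mem_Ioi.1 hpx]
  have hcore : (w, f w - 1) ∈ algCore Θ₁ := mem_algCore_hypograph f hw₁ (sub_one_lt _)
  have hw₂' : (w, f xbar + 1) ∈ Θ₂ := ⟨hw₂, lt_add_one (f xbar)⟩
  obtain ⟨L, hL0, hL⟩ := exists_linearMap_le_of_disjoint ((f.concaveOn h₁).convex_hypograph)
    (h₂.prod (convex_Ioi _)) hcore hw₂' hΘ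
  set β := L (0, 1)
  have hL_apply : ∀ p : X × ℝ, L p = L (p.1, 0) + p.2 * β := by
    intro p
    rw [← smul_eq_mul, ← map_smul, ← map_add]
    simp
  have hβ : 0 < β := by
    have hβ_nonneg : 0 ≤ β := by
      have := hL (xbar, f xbar) ⟨hxbar.1, le_rfl⟩ (xbar, f xbar + 1)
        ⟨hxbar.2, lt_add_one (f xbar)⟩
      rw [hL_apply (xbar, f xbar), hL_apply (xbar, f xbar + 1)] at this
      linarith
    refine hβ_nonneg.lt_of_ne' fun hβ => ?_
    have := L.lt_of_mem_algCore hL0 (fun a ha => hL a ha _ hw₂') hcore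
    rw [hL_apply (w, f w - 1), hL_apply (w, f xbar + 1), hβ] at this
    simp at this
  set h : X →ₗ[ℝ] ℝ := β⁻¹ • (L ∘ₗ LinearMap.inl ℝ X ℝ)
  have hL_eq : ∀ p : X × ℝ, L p = β * (h p.1 + p.2) := by
    intro p
    rw [hL_apply p]
    simp only [h, LinearMap.smul_apply, LinearMap.coe_comp, LinearMap.coe_inl, Function.comp_apply,
      smul_eq_mul]
    field_simp
  refine ⟨h, fun x₁ hx₁ x₂ hx₂ => le_of_forall_pos_le_add fun ε hε => ?_⟩
  have := hL (x₁, f x₁) ⟨hx₁, le_rfl⟩ (x₂, f xbar + ε) ⟨hx₂, by simpa using hε⟩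
  rw [hL_eq, hL_eq] at this
  linarith [le_of_mul_le_mul_left this hβ]

theorem normalCone_inter_subset_add {Ω₁ Ω₂ : Set X}
    (h₁ : Convex ℝ Ω₁) (h₂ : Convex ℝ Ω₂) {w : X} (hw₁ : w ∈ algCore Ω₁) (hw₂ : w ∈ Ω₂)
    {xbar : X} (hxbar : xbar ∈ Ω₁ ∩ Ω₂) :
    normalCone xbar (Ω₁ ∩ Ω₂) ⊆ normalCone xbar Ω₁ + normalCone xbar Ω₂ := by
  intro f hf
  obtain ⟨h, hh⟩ := exists_linearMap_add_le_of_mem_normalCone_inter h₁ h₂ hw₁ hw₂ hxbar hf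
  refine ⟨f + h, fun x hx => ?_, -h, fun x hx => ?_, add_neg_cancel_right f h⟩
  · simpa [map_sub] using hh x hx xbar hxbar.2
  · simpa [map_sub] using hh xbar hxbar.1 x hx

end normalCone

theorem normal_cone_intersection_rule_general {X : Type*} [AddCommGroup X] [Module ℝ X]
    {Ω₁ Ω₂ : Set X} (hconv₁ : Convex ℝ Ω₁) (hconv₂ : Convex ℝ Ω₂)
    (hqc : (algCore Ω₁ ∩ Ω₂).Nonempty)
    {xbar : X} (hxbar : xbar ∈ Ω₁ ∩ Ω₂) :
    normalCone xbar (Ω₁ ∩ Ω₂) = normalCone xbar Ω₁ + normalCone xbar Ω₂ := by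
  obtain ⟨w, hw₁, hw₂⟩ := hqc
  exact (normalCone_inter_subset_add hconv₁ hconv₂ hw₁ hw₂ hxbar).antisymm
    (normalCone_add_normalCone_subset xbar Ω₁ Ω₂)

/-- normal cone intersection rule in vector spaces. -/
theorem normal_cone_intersection_rule {X : Type*} [AddCommGroup X] [Module ℝ X]
    {Ω₁ Ω₂ : Set X} (hconv₁ : Convex ℝ Ω₁) (hconv₂ : Convex ℝ Ω₂)
    (hne : (Ω₁ ∩ Ω₂).Nonempty) (hqc : (algCore Ω₁ ∩ Ω₂).Nonempty)
    {xbar : X} (hxbar : xbar ∈ Ω₁ ∩ Ω₂) :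
    normalCone xbar (Ω₁ ∩ Ω₂) = normalCone xbar Ω₁ + normalCone xbar Ω₂ :=
  normal_cone_intersection_rule_general hconv₁ hconv₂ hqc hxbar
end

section
/- Let Ω₁ and Ω₂ be nonempty convex subsets of a real vector space X. Then the system {Ω₁, Ω₂} is extremal in X if and only if 0 ∉ core(Ω₁ − Ω₂), where Ω₁ − Ω₂ := {x − y : x ∈ Ω₁, y ∈ Ω₂}. -/
open Pointwise Set

/-!
The translate `Ω₁ + t • x₀` misses `Ω₂` exactly when `-(t • x₀) ∉ Ω₁ - Ω₂`. So extremality says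
that along some direction `x₀` the line through `0` leaves `Ω₁ - Ω₂` at arbitrarily small
parameters, which is precisely the failure of `0 ∈ core (Ω₁ - Ω₂)`.
-/

section

variable {X : Type*} [AddCommGroup X]

theorem image_add_right_inter_eq_empty_iff {A B : Set X} {v : X} :
    (fun w => w + v) '' A ∩ B = ∅ ↔ -v ∉ A - B := by
  rw [← not_nonempty_iff_eq_empty, not_iff_not]
  constructor
  · rintro ⟨_, ⟨a, ha, rfl⟩, hb⟩
    exact ⟨a, ha, a + v, hb, sub_add_cancel_left a v⟩
  · rintro ⟨a, ha, b, hb, hab⟩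
    rw [sub_eq_iff_eq_add'] at hab
    exact ⟨b, ⟨a, ha, hab ▸ neg_add_cancel_right b v⟩, hb⟩

variable [Module ℝ X]

theorem mem_algCore_iff_s1 {S : Set X} {x : X} :
    x ∈ algCore S ↔ ∀ v : X, ∃ δ : ℝ, 0 < δ ∧ ∀ t : ℝ, |t| < δ → x + t • v ∈ S := by
  refine ⟨And.right, fun h => ⟨?_, h⟩⟩
  obtain ⟨δ, hδ, hS⟩ := h 0
  simpa using hS 0 (by simpa using hδ)

theorem isExtremal_iff {A B : Set X} :
    IsExtremal A B ↔ ∃ v : X, ∀ δ : ℝ, 0 < δ → ∃ t : ℝ, |t| < δ ∧ t • v ∉ A - B := by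
  simp only [IsExtremal, image_add_right_inter_eq_empty_iff, ← neg_smul]
  refine exists_congr fun v => forall₂_congr fun δ _ => ⟨?_, ?_⟩
  · rintro ⟨t, ht, hAB⟩
    exact ⟨-t, by rwa [abs_neg], hAB⟩
  · rintro ⟨t, ht, hAB⟩
    exact ⟨-t, by rwa [abs_neg], by rwa [neg_neg]⟩

end

theorem extremal_iff_zero_notMem_core_diff_general {X : Type*} [AddCommGroup X] [Module ℝ X]
    {Ω₁ Ω₂ : Set X} :
    IsExtremal Ω₁ Ω₂ ↔ (0 : X) ∉ algCore (Ω₁ - Ω₂) := by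
  rw [isExtremal_iff, mem_algCore_iff_s1]
  simp only [zero_add]
  push Not
  exact Iff.rfl

/-- a system of two nonempty convex sets is extremal iff
`0 ∉ core (Ω₁ - Ω₂)`. -/
theorem extremal_iff_zero_notMem_core_diff {X : Type*} [AddCommGroup X] [Module ℝ X]
    {Ω₁ Ω₂ : Set X} (hne₁ : Ω₁.Nonempty) (hne₂ : Ω₂.Nonempty)
    (hconv₁ : Convex ℝ Ω₁) (hconv₂ : Convex ℝ Ω₂) :
    IsExtremal Ω₁ Ω₂ ↔ (0 : X) ∉ algCore (Ω₁ - Ω₂) :=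
  extremal_iff_zero_notMem_core_diff_general
end

section
/- Let Ω₁ and Ω₂ be nonempty convex subsets of a real vector space X. If the system {Ω₁, Ω₂} is extremal in X, then core(Ω₁) ∩ Ω₂ = ∅ and core(Ω₂) ∩ Ω₁ = ∅. -/
open Pointwise Set

namespace IsExtremal

variable {X : Type*} [AddCommGroup X] [Module ℝ X] {Ω₁ Ω₂ : Set X}

theorem symm (h : IsExtremal Ω₁ Ω₂) : IsExtremal Ω₂ Ω₁ := by
  obtain ⟨x₀, hx₀⟩ := h
  refine ⟨-x₀, fun δ hδ => ?_⟩
  obtain ⟨t₀, ht₀, hdisj⟩ := hx₀ δ hδ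
  refine ⟨t₀, ht₀, eq_empty_of_forall_notMem ?_⟩
  rintro _ ⟨⟨y, hy, rfl⟩, hy₁⟩
  refine hdisj.subset ⟨⟨_, hy₁, ?_⟩, hy⟩
  simp only [smul_neg, neg_add_cancel_right]

theorem algCore_inter_eq_empty (h : IsExtremal Ω₁ Ω₂) : algCore Ω₂ ∩ Ω₁ = ∅ := by
  obtain ⟨x₀, hx₀⟩ := h
  refine eq_empty_of_forall_notMem ?_
  rintro x ⟨⟨-, hcore⟩, hx₁⟩
  obtain ⟨δ, hδ, hline⟩ := hcore x₀
  obtain ⟨t₀, ht₀, hdisj⟩ := hx₀ δ hδ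
  exact hdisj.subset ⟨⟨x, hx₁, rfl⟩, hline t₀ ht₀⟩

end IsExtremal

theorem extremal_implies_core_disjoint_general {X : Type*} [AddCommGroup X] [Module ℝ X]
    {Ω₁ Ω₂ : Set X}
    (hext : IsExtremal Ω₁ Ω₂) :
    algCore Ω₁ ∩ Ω₂ = ∅ ∧ algCore Ω₂ ∩ Ω₁ = ∅ :=
  ⟨hext.symm.algCore_inter_eq_empty, hext.algCore_inter_eq_empty⟩

/-- extremality of a system of nonempty convex sets implies
`core (Ω₁) ∩ Ω₂ = ∅` and `core (Ω₂) ∩ Ω₁ = ∅`. -/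
theorem extremal_implies_core_disjoint {X : Type*} [AddCommGroup X] [Module ℝ X]
    {Ω₁ Ω₂ : Set X} (hne₁ : Ω₁.Nonempty) (hne₂ : Ω₂.Nonempty)
    (hconv₁ : Convex ℝ Ω₁) (hconv₂ : Convex ℝ Ω₂)
    (hext : IsExtremal Ω₁ Ω₂) :
    algCore Ω₁ ∩ Ω₂ = ∅ ∧ algCore Ω₂ ∩ Ω₁ = ∅ :=
  extremal_implies_core_disjoint_general hext
end

section
/- Let Ω₁ and Ω₂ be nonempty convex subsets of a real vector space X and let x̄ ∈ Ω₁ ∩ Ω₂. Then Ω₁ and Ω₂ are separated by a hyperplane (i.e., there exists a nonzero linear f : X → ℝ with sup{f(x) : x ∈ Ω₁} ≤ inf{f(x) : x ∈ Ω₂}) if and only if N(x̄; Ω₁) ∩ (−N(x̄; Ω₂)) ≠ {0}, i.e., there exists a nonzero linear function f with f ∈ N(x̄; Ω₁) and −f ∈ N(x̄; Ω₂). -/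
open Pointwise Set

section NormalCone

variable {X : Type*} [AddCommGroup X] [Module ℝ X]

theorem mem_normalCone_iff_le {xbar : X} {Ω : Set X} {f : X →ₗ[ℝ] ℝ} :
    f ∈ normalCone xbar Ω ↔ ∀ x ∈ Ω, f x ≤ f xbar := by
  simp only [normalCone, mem_ofPred_eq, map_sub, sub_nonpos]

theorem neg_mem_normalCone_iff_le {xbar : X} {Ω : Set X} {f : X →ₗ[ℝ] ℝ} :
    -f ∈ normalCone xbar Ω ↔ ∀ x ∈ Ω, f xbar ≤ f x := by
  simp only [mem_normalCone_iff_le, LinearMap.neg_apply, neg_le_neg_iff]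

theorem separates_iff_le_and_le_of_mem_inter {Ω₁ Ω₂ : Set X} {xbar : X}
    (hxbar : xbar ∈ Ω₁ ∩ Ω₂) {f : X →ₗ[ℝ] ℝ} :
    (∀ x ∈ Ω₁, ∀ y ∈ Ω₂, f x ≤ f y) ↔
      (∀ x ∈ Ω₁, f x ≤ f xbar) ∧ ∀ y ∈ Ω₂, f xbar ≤ f y :=
  ⟨fun hsep => ⟨fun x hx => hsep x hx xbar hxbar.2, fun y hy => hsep xbar hxbar.1 y hy⟩,
    fun ⟨h₁, h₂⟩ x hx y hy => (h₁ x hx).trans (h₂ y hy)⟩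

end NormalCone

theorem separation_iff_normal_cone_condition_general {X : Type*} [AddCommGroup X] [Module ℝ X]
    {Ω₁ Ω₂ : Set X}
    {xbar : X} (hxbar : xbar ∈ Ω₁ ∩ Ω₂) :
    (∃ f : X →ₗ[ℝ] ℝ, f ≠ 0 ∧ ∀ x ∈ Ω₁, ∀ y ∈ Ω₂, f x ≤ f y) ↔
      (∃ f : X →ₗ[ℝ] ℝ, f ≠ 0 ∧ f ∈ normalCone xbar Ω₁ ∧ -f ∈ normalCone xbar Ω₂) := by
  refine exists_congr fun f => and_congr_right fun _ => ?_
  rw [separates_iff_le_and_le_of_mem_inter hxbar, mem_normalCone_iff_le,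
    neg_mem_normalCone_iff_le]

/-- for nonempty convex sets with a common point `xbar`, separation by a
hyperplane is equivalent to `N(xbar; Ω₁) ∩ (−N(xbar; Ω₂)) ≠ {0}`. -/
theorem separation_iff_normal_cone_condition {X : Type*} [AddCommGroup X] [Module ℝ X]
    {Ω₁ Ω₂ : Set X} (hne₁ : Ω₁.Nonempty) (hne₂ : Ω₂.Nonempty)
    (hconv₁ : Convex ℝ Ω₁) (hconv₂ : Convex ℝ Ω₂)
    {xbar : X} (hxbar : xbar ∈ Ω₁ ∩ Ω₂) :
    (∃ f : X →ₗ[ℝ] ℝ, f ≠ 0 ∧ ∀ x ∈ Ω₁, ∀ y ∈ Ω₂, f x ≤ f y) ↔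
      (∃ f : X →ₗ[ℝ] ℝ, f ≠ 0 ∧ f ∈ normalCone xbar Ω₁ ∧ -f ∈ normalCone xbar Ω₂) :=
  separation_iff_normal_cone_condition_general hxbar
end

section
/- Let Ω₁ and Ω₂ be nonempty convex subsets of a real vector space X. If Ω₁ and Ω₂ are separated by a hyperplane, i.e., there exists a nonzero linear function f : X → ℝ with sup{f(x) : x ∈ Ω₁} ≤ inf{f(x) : x ∈ Ω₂}, then the system {Ω₁, Ω₂} is extremal in X. -/
open Pointwise Set

section Separation

variable {𝕜 E : Type*} [Ring 𝕜] [LinearOrder 𝕜] [IsStrictOrderedRing 𝕜]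
  [AddCommGroup E] [Module 𝕜 E]

theorem LinearMap.exists_apply_pos_of_ne_zero {f : E →ₗ[𝕜] 𝕜} (hf : f ≠ 0) :
    ∃ v, 0 < f v := by
  obtain ⟨v, hv⟩ := DFunLike.ne_iff.mp hf
  rcases (show f v ≠ 0 from hv).lt_or_gt with hneg | hpos
  · exact ⟨-v, by simpa using hneg⟩
  · exact ⟨v, hpos⟩

theorem image_add_smul_inter_eq_empty_of_le {f : E →ₗ[𝕜] 𝕜} {A B : Set E}
    (hAB : ∀ x ∈ A, ∀ y ∈ B, f x ≤ f y) {v : E} (hv : 0 < f v) {t : 𝕜} (ht : t < 0) :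
    (fun w => w + t • v) '' A ∩ B = ∅ := by
  refine Set.eq_empty_of_forall_notMem ?_
  rintro _ ⟨⟨x, hx, rfl⟩, hy⟩
  have hshift : f (x + t • v) < f x := by
    simpa [map_add, map_smul] using mul_neg_of_neg_of_pos ht hv
  exact (hAB x hx _ hy).not_gt hshift

end Separation

theorem separation_implies_extremal_general {X : Type*} [AddCommGroup X] [Module ℝ X]
    {Ω₁ Ω₂ : Set X}
    (hsep : ∃ f : X →ₗ[ℝ] ℝ, f ≠ 0 ∧ ∀ x ∈ Ω₁, ∀ y ∈ Ω₂, f x ≤ f y) :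
    IsExtremal Ω₁ Ω₂ := by
  obtain ⟨f, hf, hle⟩ := hsep
  obtain ⟨v, hv⟩ := f.exists_apply_pos_of_ne_zero hf
  refine ⟨v, fun δ hδ => ⟨-(δ / 2), ?_, ?_⟩⟩
  · rw [abs_neg, abs_of_pos (half_pos hδ)]
    exact half_lt_self hδ
  · exact image_add_smul_inter_eq_empty_of_le hle hv (by linarith)

/-- hyperplane separation of nonempty convex sets yields set extremality. -/
theorem separation_implies_extremal {X : Type*} [AddCommGroup X] [Module ℝ X]
    {Ω₁ Ω₂ : Set X} (hne₁ : Ω₁.Nonempty) (hne₂ : Ω₂.Nonempty)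
    (hconv₁ : Convex ℝ Ω₁) (hconv₂ : Convex ℝ Ω₂)
    (hsep : ∃ f : X →ₗ[ℝ] ℝ, f ≠ 0 ∧ ∀ x ∈ Ω₁, ∀ y ∈ Ω₂, f x ≤ f y) :
    IsExtremal Ω₁ Ω₂ :=
  separation_implies_extremal_general hsep
end

section
/- Let F₁, F₂ : X ⇒ Y be set-valued mappings between real vector spaces whose graphs are convex. Assume that the graph of F₁ is core-solid and that there exists x ∈ core(dom(F₁)) ∩ dom(F₂) with core(F₁(x)) ≠ ∅, where dom(F) := {x : F(x) ≠ ∅}. Then for every (x̄, ȳ) ∈ gph(F₁ + F₂), every pair (ȳ₁, ȳ₂) with ȳ = ȳ₁ + ȳ₂, ȳ₁ ∈ F₁(x̄), ȳ₂ ∈ F₂(x̄), and every linear function g : Y → ℝ, one has D*(F₁ + F₂)(x̄, ȳ)(g) = D*F₁(x̄, ȳ₁)(g) + D*F₂(x̄, ȳ₂)(g), where (F₁ + F₂)(x) := {y₁ + y₂ : y₁ ∈ F₁(x), y₂ ∈ F₂(x)}. -/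
open Pointwise Set

/-!
Given `f ∈ D*(F₁ + F₂)(x̄, ȳ₁ + ȳ₂)(g)`, consider the set `C ⊆ X × ℝ` of the pairs
`(x₁ - x₂, g (y₁ - ȳ₁) + g (y₂ - ȳ₂) - f (x₂ - x̄))` with `y₁ ∈ F₁ x₁`, `y₂ ∈ F₂ x₂`.
It is convex, contains `0`, and the coderivative inequality for `F₁ + F₂` says exactly that
its points above `0 ∈ X` have nonnegative second coordinate. A point of
`core (dom F₁) ∩ dom F₂` makes the projection of `C` to `X` absorbing, so the Riesz extension
theorem, applied to the cone generated by `C`, yields a linear `f₁` with `f₁ v ≤ r` on `C`.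
Reading this off at `x₂ = x̄` and at `x₁ = x̄` gives `f₁ ∈ D*F₁(x̄, ȳ₁)(g)` and
`f - f₁ ∈ D*F₂(x̄, ȳ₂)(g)`.
-/

section ConeSeparation
variable {X : Type*} [AddCommGroup X] [Module ℝ X]

theorem PointedCone.exists_linearMap_le_snd (K : PointedCone ℝ (X × ℝ))
    (hdom : ∀ v, ∃ r, (v, r) ∈ K) (hzero : ∀ r, ((0 : X), r) ∈ K → 0 ≤ r) :
    ∃ φ : X →ₗ[ℝ] ℝ, ∀ p ∈ K, φ p.1 ≤ p.2 := by
  let ψ : (X × ℝ) →ₗ.[ℝ] ℝ :=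
    ⟨LinearMap.ker (LinearMap.fst ℝ X ℝ), (LinearMap.snd ℝ X ℝ).domRestrict _⟩
  obtain ⟨G, hGψ, hG⟩ := riesz_extension K ψ
    (fun ⟨p, hp⟩ hpK => hzero p.2 (by rwa [← (LinearMap.mem_ker.1 hp : p.1 = 0)]))
    (fun ⟨v, s⟩ => by
      obtain ⟨r, hr⟩ := hdom v
      exact ⟨⟨(0, r - s), LinearMap.mem_ker.2 rfl⟩, by simpa using hr⟩)
  refine ⟨-(G ∘ₗ LinearMap.inl ℝ X ℝ), fun p hp => ?_⟩
  have hsnd : G (0, p.2) = p.2 := hGψ ⟨(0, p.2), LinearMap.mem_ker.2 rfl⟩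
  have hsplit : G p = G (p.1, 0) + G (0, p.2) := by rw [← map_add]; simp
  have := hG p hp
  simp only [LinearMap.neg_apply, LinearMap.coe_comp, Function.comp_apply, LinearMap.inl_apply]
  linarith

theorem Convex.exists_linearMap_le_snd {C : Set (X × ℝ)} (hC : Convex ℝ C) (h0 : 0 ∈ C)
    (habs : ∀ v, ∃ t : ℝ, 0 < t ∧ ∃ r, (t • v, r) ∈ C) (hzero : ∀ r, ((0 : X), r) ∈ C → 0 ≤ r) :
    ∃ φ : X →ₗ[ℝ] ℝ, ∀ p ∈ C, φ p.1 ≤ p.2 := by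
  let K := (ConvexCone.hull ℝ C).toPointedCone (ConvexCone.subset_hull h0)
  have hmem : ∀ p, p ∈ K ↔ ∃ c : ℝ, 0 < c ∧ c⁻¹ • p ∈ C := fun p => by
    refine ((ConvexCone.hull ℝ C).mem_toPointedCone _ p).trans
      ((ConvexCone.mem_hull_of_convex hC).trans (exists_congr fun c => ?_))
    exact and_congr_right fun hc => Set.mem_smul_set_iff_inv_smul_mem₀ hc.ne' C p
  obtain ⟨φ, hφ⟩ := K.exists_linearMap_le_snd
    (fun v => by
      obtain ⟨t, ht, r, hr⟩ := habs v
      refine ⟨r / t, (hmem _).2 ⟨t⁻¹, inv_pos.2 ht, ?_⟩⟩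
      simpa [ht.ne', mul_div_cancel₀] using hr)
    (fun r hr => by
      obtain ⟨c, hc, hcr⟩ := (hmem _).1 hr
      have := hzero (c⁻¹ * r) (by simpa using hcr)
      exact nonneg_of_mul_nonneg_right this (inv_pos.2 hc))
  exact ⟨φ, fun p hp => hφ p (ConvexCone.subset_hull hp)⟩

end ConeSeparation

section SumRule
variable {X Y : Type*} [AddCommGroup X] [Module ℝ X] [AddCommGroup Y] [Module ℝ Y]
  {F₁ F₂ : X → Set Y} {xbar : X} {ybar₁ ybar₂ : Y} {g : Y →ₗ[ℝ] ℝ} {f : X →ₗ[ℝ] ℝ}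

theorem add_coderiv_subset_coderiv_add :
    coderiv F₁ xbar ybar₁ g + coderiv F₂ xbar ybar₂ g ⊆
      coderiv (fun x => F₁ x + F₂ x) xbar (ybar₁ + ybar₂) g := by
  rintro _ ⟨f₁, hf₁, f₂, hf₂, rfl⟩ x _ ⟨y₁, hy₁, y₂, hy₂, rfl⟩
  have := add_nonpos (hf₁ x y₁ hy₁) (hf₂ x y₂ hy₂)
  simp only [LinearMap.add_apply, add_sub_add_comm, map_add] at this ⊢
  linarith

variable (F₁ F₂ xbar ybar₁ ybar₂ g f) in
def sumRuleSet : Set (X × ℝ) :=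
  (fun p : (X × Y) × (X × Y) =>
      (p.1.1 - p.2.1, g (p.1.2 - ybar₁) + g (p.2.2 - ybar₂) - f (p.2.1 - xbar))) ''
    (svGraph F₁ ×ˢ svGraph F₂)

theorem convex_sumRuleSet (hconv₁ : Convex ℝ (svGraph F₁)) (hconv₂ : Convex ℝ (svGraph F₂)) :
    Convex ℝ (sumRuleSet F₁ F₂ xbar ybar₁ ybar₂ g f) := by
  rintro _ ⟨p, hp, rfl⟩ _ ⟨q, hq, rfl⟩ a b ha hb hab
  refine ⟨a • p + b • q, hconv₁.prod hconv₂ hp hq ha hb hab, ?_⟩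
  ext
  · simp only [Prod.fst_add, Prod.smul_fst, Prod.snd_add, Prod.smul_snd]
    module
  · simp only [Prod.fst_add, Prod.smul_fst, Prod.snd_add, Prod.smul_snd, map_sub, map_add,
      map_smul, smul_eq_mul]
    linear_combination (g ybar₁ + g ybar₂ - f xbar) * hab

theorem zero_mem_sumRuleSet (h₁ : ybar₁ ∈ F₁ xbar) (h₂ : ybar₂ ∈ F₂ xbar) :
    0 ∈ sumRuleSet F₁ F₂ xbar ybar₁ ybar₂ g f :=
  ⟨((xbar, ybar₁), (xbar, ybar₂)), ⟨h₁, h₂⟩, by simp⟩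

theorem exists_smul_mem_sumRuleSet {x₀ : X} (hx₁ : x₀ ∈ algCore (svDom F₁))
    (hx₂ : x₀ ∈ svDom F₂) (v : X) :
    ∃ t : ℝ, 0 < t ∧ ∃ r, (t • v, r) ∈ sumRuleSet F₁ F₂ xbar ybar₁ ybar₂ g f := by
  obtain ⟨δ, hδ, hball⟩ := hx₁.2 v
  obtain ⟨y₁, hy₁⟩ : (F₁ (x₀ + (δ / 2) • v)).Nonempty :=
    hball (δ / 2) (by rw [abs_of_pos (half_pos hδ)]; exact half_lt_self hδ)
  obtain ⟨y₂, hy₂⟩ := hx₂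
  exact ⟨δ / 2, half_pos hδ, _, ((_, y₁), (x₀, y₂)), ⟨hy₁, hy₂⟩,
    Prod.ext (add_sub_cancel_left _ _) rfl⟩

theorem nonneg_of_mem_sumRuleSet
    (hf : f ∈ coderiv (fun x => F₁ x + F₂ x) xbar (ybar₁ + ybar₂) g) {r : ℝ}
    (hr : ((0 : X), r) ∈ sumRuleSet F₁ F₂ xbar ybar₁ ybar₂ g f) : 0 ≤ r := by
  obtain ⟨⟨⟨x₁, y₁⟩, ⟨x₂, y₂⟩⟩, ⟨hy₁, hy₂⟩, hp⟩ := hr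
  simp only [Prod.mk.injEq, sub_eq_zero] at hp
  obtain ⟨rfl, rfl⟩ := hp
  have := hf x₁ (y₁ + y₂) (Set.add_mem_add hy₁ hy₂)
  rw [add_sub_add_comm, map_add] at this
  linarith

theorem coderiv_add_subset_add_coderiv (hconv₁ : Convex ℝ (svGraph F₁))
    (hconv₂ : Convex ℝ (svGraph F₂)) {x₀ : X} (hx₁ : x₀ ∈ algCore (svDom F₁))
    (hx₂ : x₀ ∈ svDom F₂) (h₁ : ybar₁ ∈ F₁ xbar) (h₂ : ybar₂ ∈ F₂ xbar) :
    coderiv (fun x => F₁ x + F₂ x) xbar (ybar₁ + ybar₂) g ⊆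
      coderiv F₁ xbar ybar₁ g + coderiv F₂ xbar ybar₂ g := by
  intro f hf
  obtain ⟨f₁, hf₁⟩ := (convex_sumRuleSet (xbar := xbar) (g := g) (f := f) hconv₁ hconv₂)
    |>.exists_linearMap_le_snd (zero_mem_sumRuleSet h₁ h₂)
      (exists_smul_mem_sumRuleSet hx₁ hx₂) (fun _ => nonneg_of_mem_sumRuleSet hf)
  refine ⟨f₁, fun x y₁ hy₁ => ?_, f - f₁, fun x y₂ hy₂ => ?_, add_sub_cancel f₁ f⟩
  · have := hf₁ _ ⟨((x, y₁), (xbar, ybar₂)), ⟨hy₁, h₂⟩, rfl⟩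
    simp only [sub_self, map_zero] at this
    linarith
  · have := hf₁ _ ⟨((xbar, ybar₁), (x, y₂)), ⟨h₁, hy₂⟩, rfl⟩
    simp only [sub_self, map_zero, zero_add, ← neg_sub x xbar, map_neg] at this
    simp only [LinearMap.sub_apply]
    linarith

end SumRule

theorem coderivative_sum_rule_general {X Y : Type*} [AddCommGroup X] [Module ℝ X]
    [AddCommGroup Y] [Module ℝ Y] (F₁ F₂ : X → Set Y)
    (hconv₁ : Convex ℝ (svGraph F₁)) (hconv₂ : Convex ℝ (svGraph F₂))
    (hqc : ∃ x : X, x ∈ algCore (svDom F₁) ∧ x ∈ svDom F₂ ∧ (algCore (F₁ x)).Nonempty)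
    (xbar : X) (ybar : Y)
    (ybar₁ ybar₂ : Y) (h₁ : ybar₁ ∈ F₁ xbar) (h₂ : ybar₂ ∈ F₂ xbar)
    (hsum : ybar = ybar₁ + ybar₂) (g : Y →ₗ[ℝ] ℝ) :
    coderiv (fun x => F₁ x + F₂ x) xbar ybar g =
      coderiv F₁ xbar ybar₁ g + coderiv F₂ xbar ybar₂ g := by
  obtain ⟨x₀, hx₁, hx₂, -⟩ := hqc
  subst hsum
  exact (coderiv_add_subset_add_coderiv hconv₁ hconv₂ hx₁ hx₂ h₁ h₂).antisymm
    add_coderiv_subset_coderiv_add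

/-- coderivative sum rule for convex set-valued mappings. -/
theorem coderivative_sum_rule {X Y : Type*} [AddCommGroup X] [Module ℝ X]
    [AddCommGroup Y] [Module ℝ Y] (F₁ F₂ : X → Set Y)
    (hconv₁ : Convex ℝ (svGraph F₁)) (hconv₂ : Convex ℝ (svGraph F₂))
    (hsolid : (algCore (svGraph F₁)).Nonempty)
    (hqc : ∃ x : X, x ∈ algCore (svDom F₁) ∧ x ∈ svDom F₂ ∧ (algCore (F₁ x)).Nonempty)
    (xbar : X) (ybar : Y) (hxy : ybar ∈ F₁ xbar + F₂ xbar)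
    (ybar₁ ybar₂ : Y) (h₁ : ybar₁ ∈ F₁ xbar) (h₂ : ybar₂ ∈ F₂ xbar)
    (hsum : ybar = ybar₁ + ybar₂) (g : Y →ₗ[ℝ] ℝ) :
    coderiv (fun x => F₁ x + F₂ x) xbar ybar g =
      coderiv F₁ xbar ybar₁ g + coderiv F₂ xbar ybar₂ g :=
  coderivative_sum_rule_general F₁ F₂ hconv₁ hconv₂ hqc xbar ybar ybar₁ ybar₂ h₁ h₂ hsum g
end

section
/- Let φ₁, φ₂ : X → ℝ ∪ {+∞} be proper convex functions on a real vector space X. Assume that the epigraph of φ₁ is core-solid and that core(dom(φ₁)) ∩ dom(φ₂) ≠ ∅. Then for each x̄ ∈ dom(φ₁) ∩ dom(φ₂) one has the subdifferential sum rule ∂(φ₁ + φ₂)(x̄) = ∂φ₁(x̄) + ∂φ₂(x̄). -/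
open Pointwise Set

/-!
Let `f ∈ ∂(φ₁ + φ₂)(x̄)`. On `dom φ₁ ∩ dom φ₂` the convex function `h₁ = φ₁ - φ₁ x̄` lies above
the concave function `-h₂`, where `h₂ = φ₂ - φ₂ x̄ - f (· - x̄)`. The sublinear function
`N z = inf {(h₁ u + h₂ v) / t | t > 0, u ∈ dom φ₁, v ∈ dom φ₂, u - v = t z}` is finite: a point of
`core (dom φ₁) ∩ dom φ₂` makes every infimum nonempty, and `N z + N (-z) ≥ N 0 ≥ 0`. The algebraic
Hahn–Banach theorem gives a linear `g ≤ N`, i.e. `g (u - v) ≤ h₁ u + h₂ v`; putting `v = x̄` and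
`u = x̄` shows `g ∈ ∂φ₁(x̄)` and `f - g ∈ ∂φ₂(x̄)`.
-/

section Separation

variable {X : Type*} [AddCommGroup X] [Module ℝ X] {D₁ D₂ : Set X} {h₁ h₂ : X → ℝ}

def slopeSet (D₁ D₂ : Set X) (h₁ h₂ : X → ℝ) (z : X) : Set ℝ :=
  {c | ∃ t > 0, ∃ u ∈ D₁, ∃ v ∈ D₂, u - v = t • z ∧ h₁ u + h₂ v ≤ t * c}

lemma slopeSet_nonempty (hcore : (algCore D₁ ∩ D₂).Nonempty) (z : X) :
    (slopeSet D₁ D₂ h₁ h₂ z).Nonempty := by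
  obtain ⟨a, ⟨-, ha⟩, haD₂⟩ := hcore
  obtain ⟨δ, hδ, hδz⟩ := ha z
  have hmem : a + (δ / 2) • z ∈ D₁ := hδz _ (by rw [abs_of_pos (by positivity)]; linarith)
  exact ⟨(h₁ (a + (δ / 2) • z) + h₂ a) / (δ / 2), δ / 2, by positivity, _, hmem, a, haD₂,
    add_sub_cancel_left _ _, by rw [mul_div_cancel₀ _ (by positivity)]⟩

lemma slopeSet_add_subset (hc₁ : ConvexOn ℝ D₁ h₁) (hc₂ : ConvexOn ℝ D₂ h₂) (z w : X) :
    slopeSet D₁ D₂ h₁ h₂ z + slopeSet D₁ D₂ h₁ h₂ w ⊆ slopeSet D₁ D₂ h₁ h₂ (z + w) := by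
  rintro _ ⟨c, ⟨t, ht, u, hu, v, hv, huv, hc⟩, d, ⟨s, hs, u', hu', v', hv', huv', hd⟩, rfl⟩
  -- weights `s : t` give both witnesses the same scale `t * s / (t + s)` in front of `z` and `w`
  obtain ⟨a, ha_def⟩ : ∃ a, a = s / (t + s) := ⟨_, rfl⟩
  obtain ⟨b, hb_def⟩ : ∃ b, b = t / (t + s) := ⟨_, rfl⟩
  have ha : 0 ≤ a := by rw [ha_def]; positivity
  have hb : 0 ≤ b := by rw [hb_def]; positivity
  have hab : a + b = 1 := by rw [ha_def, hb_def, ← add_div, add_comm, div_self (by positivity)]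
  have hat : a * t = t * s / (t + s) := by rw [ha_def]; ring
  have hbs : b * s = t * s / (t + s) := by rw [hb_def]; ring
  refine ⟨t * s / (t + s), by positivity, a • u + b • u', hc₁.1 hu hu' ha hb hab,
    a • v + b • v', hc₂.1 hv hv' ha hb hab, ?_, ?_⟩
  · calc a • u + b • u' - (a • v + b • v') = a • (u - v) + b • (u' - v') := by module
      _ = (t * s / (t + s)) • (z + w) := by rw [huv, huv', smul_smul, smul_smul, hat, hbs, smul_add]
  · calc h₁ (a • u + b • u') + h₂ (a • v + b • v')
        ≤ (a * h₁ u + b * h₁ u') + (a * h₂ v + b * h₂ v') :=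
          add_le_add (hc₁.2 hu hu' ha hb hab) (hc₂.2 hv hv' ha hb hab)
      _ = a * (h₁ u + h₂ v) + b * (h₁ u' + h₂ v') := by ring
      _ ≤ a * (t * c) + b * (s * d) := by gcongr
      _ = t * s / (t + s) * (c + d) := by rw [← mul_assoc, ← mul_assoc, hat, hbs]; ring

lemma slopeSet_smul {r : ℝ} (hr : 0 < r) (z : X) :
    slopeSet D₁ D₂ h₁ h₂ (r • z) = r • slopeSet D₁ D₂ h₁ h₂ z := by
  ext c
  rw [Set.mem_smul_set]
  constructor
  · rintro ⟨t, ht, u, hu, v, hv, huv, hc⟩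
    refine ⟨c / r, ⟨t * r, by positivity, u, hu, v, hv, by rw [huv, smul_smul], ?_⟩, ?_⟩
    · rwa [mul_assoc, mul_div_cancel₀ _ hr.ne']
    · simp only [smul_eq_mul, mul_div_cancel₀ _ hr.ne']
  · rintro ⟨c, ⟨t, ht, u, hu, v, hv, huv, hc⟩, rfl⟩
    refine ⟨t / r, by positivity, u, hu, v, hv, ?_, ?_⟩
    · rw [huv, smul_smul, div_mul_cancel₀ _ hr.ne']
    · rwa [smul_eq_mul, ← mul_assoc, div_mul_cancel₀ _ hr.ne']

lemma nonneg_of_mem_slopeSet_zero (hnn : ∀ u ∈ D₁ ∩ D₂, 0 ≤ h₁ u + h₂ u) {c : ℝ}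
    (hc : c ∈ slopeSet D₁ D₂ h₁ h₂ 0) : 0 ≤ c := by
  obtain ⟨t, ht, u, hu, v, hv, huv, hle⟩ := hc
  rw [smul_zero, sub_eq_zero] at huv
  subst huv
  exact nonneg_of_mul_nonneg_right ((hnn u ⟨hu, hv⟩).trans hle) ht

lemma bddBelow_slopeSet (hc₁ : ConvexOn ℝ D₁ h₁) (hc₂ : ConvexOn ℝ D₂ h₂)
    (hnn : ∀ u ∈ D₁ ∩ D₂, 0 ≤ h₁ u + h₂ u) (hcore : (algCore D₁ ∩ D₂).Nonempty) (z : X) :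
    BddBelow (slopeSet D₁ D₂ h₁ h₂ z) := by
  obtain ⟨d, hd⟩ := slopeSet_nonempty (h₁ := h₁) (h₂ := h₂) hcore (-z)
  refine ⟨-d, fun c hc => ?_⟩
  have h0 := slopeSet_add_subset hc₁ hc₂ z (-z) (add_mem_add hc hd)
  rw [add_neg_cancel] at h0
  linarith [nonneg_of_mem_slopeSet_zero hnn h0]

theorem exists_linearMap_le_add (hc₁ : ConvexOn ℝ D₁ h₁) (hc₂ : ConvexOn ℝ D₂ h₂)
    (hnn : ∀ u ∈ D₁ ∩ D₂, 0 ≤ h₁ u + h₂ u) (hcore : (algCore D₁ ∩ D₂).Nonempty) :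
    ∃ g : X →ₗ[ℝ] ℝ, ∀ u ∈ D₁, ∀ v ∈ D₂, g (u - v) ≤ h₁ u + h₂ v := by
  set N : X → ℝ := fun z => sInf (slopeSet D₁ D₂ h₁ h₂ z)
  have hne := slopeSet_nonempty (h₁ := h₁) (h₂ := h₂) hcore
  have hbdd := bddBelow_slopeSet hc₁ hc₂ hnn hcore
  have N_hom : ∀ r : ℝ, 0 < r → ∀ z, N (r • z) = r * N z := fun r hr z => by
    simp only [N, slopeSet_smul hr, Real.sInf_smul_of_nonneg hr.le, smul_eq_mul]
  have N_add : ∀ z w, N (z + w) ≤ N z + N w := fun z w => by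
    rw [← csInf_add (hne z) (hbdd z) (hne w) (hbdd w)]
    exact csInf_le_csInf (hbdd _) ((hne z).add (hne w)) (slopeSet_add_subset hc₁ hc₂ z w)
  have N_zero : 0 ≤ N 0 := le_csInf (hne 0) fun c => nonneg_of_mem_slopeSet_zero hnn
  obtain ⟨g, -, hg⟩ := exists_extension_of_le_sublinear ⟨⊥, 0⟩ N N_hom N_add fun x => by
    rw [(Submodule.mem_bot ℝ).mp x.2]
    exact N_zero
  refine ⟨g, fun u hu v hv => (hg _).trans (csInf_le (hbdd _) ?_)⟩
  exact ⟨1, one_pos, u, hu, v, hv, (one_smul ℝ _).symm, (one_mul _).symm.le⟩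

end Separation

section Subdifferential

variable {X : Type*} [AddCommGroup X] [Module ℝ X]

lemma ConvexFun.apply_combo_le_coe_toReal {φ : X → EReal} (hφ : ConvexFun φ) (hbot : ∀ x, φ x ≠ ⊥)
    {x y : X} (hx : x ∈ fDom φ) (hy : y ∈ fDom φ) {a b : ℝ} (ha : 0 ≤ a) (hb : 0 ≤ b)
    (hab : a + b = 1) :
    φ (a • x + b • y) ≤ ((a * (φ x).toReal + b * (φ y).toReal : ℝ) : EReal) := by
  obtain rfl : b = 1 - a := by linarith
  have h := hφ x y a ha (by linarith)
  rwa [← EReal.coe_toReal hx.ne (hbot x), ← EReal.coe_toReal hy.ne (hbot y), ← EReal.coe_mul,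
    ← EReal.coe_mul, ← EReal.coe_add] at h

lemma ConvexFun.convexOn_toReal {φ : X → EReal} (hφ : ConvexFun φ) (hbot : ∀ x, φ x ≠ ⊥) :
    ConvexOn ℝ (fDom φ) (fun x => (φ x).toReal) := by
  refine ⟨fun x hx y hy a b ha hb hab => ?_, fun x hx y hy a b ha hb hab => ?_⟩
  · exact (hφ.apply_combo_le_coe_toReal hbot hx hy ha hb hab).trans_lt (EReal.coe_lt_top _)
  · simpa only [smul_eq_mul, EReal.toReal_coe] using
      EReal.toReal_le_toReal (hφ.apply_combo_le_coe_toReal hbot hx hy ha hb hab) (hbot _)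
        (EReal.coe_ne_top _)

lemma mem_subdiff_iff_toReal {φ : X → EReal} (hbot : ∀ x, φ x ≠ ⊥) {xbar : X}
    (hxbar : xbar ∈ fDom φ) {f : X →ₗ[ℝ] ℝ} :
    f ∈ subdiff φ xbar ↔ ∀ x ∈ fDom φ, (φ xbar).toReal + f (x - xbar) ≤ (φ x).toReal := by
  have hcoe : ∀ x ∈ fDom φ, ((φ x).toReal : EReal) = φ x :=
    fun x hx => EReal.coe_toReal hx.ne (hbot x)
  refine ⟨fun hf x hx => ?_, fun h x => ?_⟩
  · have := hf x
    rwa [← hcoe xbar hxbar, ← hcoe x hx, ← EReal.coe_add, EReal.coe_le_coe_iff] at this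
  · by_cases hx : φ x = ⊤
    · exact hx ▸ le_top
    · have hx : x ∈ fDom φ := lt_top_iff_ne_top.mpr hx
      rw [← hcoe xbar hxbar, ← hcoe x hx, ← EReal.coe_add, EReal.coe_le_coe_iff]
      exact h x hx

lemma subdiff_add_subdiff_subset (φ₁ φ₂ : X → EReal) (xbar : X) :
    subdiff φ₁ xbar + subdiff φ₂ xbar ⊆ subdiff (fun x => φ₁ x + φ₂ x) xbar := by
  rintro _ ⟨f₁, hf₁, f₂, hf₂, rfl⟩ x
  calc φ₁ xbar + φ₂ xbar + (((f₁ + f₂) (x - xbar) : ℝ) : EReal)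
      = (φ₁ xbar + (f₁ (x - xbar) : EReal)) + (φ₂ xbar + (f₂ (x - xbar) : EReal)) := by
        rw [LinearMap.add_apply, EReal.coe_add, add_add_add_comm]
    _ ≤ φ₁ x + φ₂ x := add_le_add (hf₁ x) (hf₂ x)

lemma subdiff_add_subset_add_subdiff {φ₁ φ₂ : X → EReal}
    (hbot₁ : ∀ x, φ₁ x ≠ ⊥) (hbot₂ : ∀ x, φ₂ x ≠ ⊥)
    (hconv₁ : ConvexFun φ₁) (hconv₂ : ConvexFun φ₂)
    (hqc : (algCore (fDom φ₁) ∩ fDom φ₂).Nonempty)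
    {xbar : X} (hxbar : xbar ∈ fDom φ₁ ∩ fDom φ₂) :
    subdiff (fun x => φ₁ x + φ₂ x) xbar ⊆ subdiff φ₁ xbar + subdiff φ₂ xbar := by
  intro f hf
  have hbot : ∀ x, φ₁ x + φ₂ x ≠ ⊥ := fun x => EReal.add_ne_bot_iff.mpr ⟨hbot₁ x, hbot₂ x⟩
  have hsum : ∀ x ∈ fDom φ₁ ∩ fDom φ₂,
      (φ₁ x + φ₂ x).toReal = (φ₁ x).toReal + (φ₂ x).toReal :=
    fun x hx => EReal.toReal_add hx.1.ne (hbot₁ x) hx.2.ne (hbot₂ x)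
  have hdom : ∀ x ∈ fDom φ₁ ∩ fDom φ₂, x ∈ fDom (fun x => φ₁ x + φ₂ x) :=
    fun x hx => EReal.add_lt_top hx.1.ne hx.2.ne
  rw [mem_subdiff_iff_toReal hbot (hdom xbar hxbar)] at hf
  obtain ⟨g, hg⟩ := exists_linearMap_le_add (D₁ := fDom φ₁) (D₂ := fDom φ₂)
    (h₁ := fun x => (φ₁ x).toReal + -(φ₁ xbar).toReal)
    (h₂ := fun x => (φ₂ x).toReal - f x + (f xbar - (φ₂ xbar).toReal))
    ((hconv₁.convexOn_toReal hbot₁).add_const _)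
    (((hconv₂.convexOn_toReal hbot₂).sub (f.concaveOn (hconv₂.convexOn_toReal hbot₂).1)).add_const _)
    (fun u hu => by
      have := hf u (hdom u hu)
      rw [hsum u hu, hsum xbar hxbar, map_sub] at this
      linarith) hqc
  refine ⟨g, ?_, f - g, ?_, add_sub_cancel _ _⟩
  · refine (mem_subdiff_iff_toReal hbot₁ hxbar.1).mpr fun x hx => ?_
    have := hg x hx xbar hxbar.2
    linarith
  · refine (mem_subdiff_iff_toReal hbot₂ hxbar.2).mpr fun x hx => ?_
    have := hg xbar hxbar.1 x hx
    simp only [map_sub, LinearMap.sub_apply] at this ⊢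
    linarith

end Subdifferential

theorem subdifferential_sum_rule_general {X : Type*} [AddCommGroup X] [Module ℝ X]
    (φ₁ φ₂ : X → EReal)
    (hbot₁ : ∀ x, φ₁ x ≠ ⊥) (hbot₂ : ∀ x, φ₂ x ≠ ⊥)
    (hconv₁ : ConvexFun φ₁) (hconv₂ : ConvexFun φ₂)
    (hqc : (algCore (fDom φ₁) ∩ fDom φ₂).Nonempty)
    (xbar : X) (hxbar : xbar ∈ fDom φ₁ ∩ fDom φ₂) :
    subdiff (fun x => φ₁ x + φ₂ x) xbar = subdiff φ₁ xbar + subdiff φ₂ xbar :=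
  (subdiff_add_subset_add_subdiff hbot₁ hbot₂ hconv₁ hconv₂ hqc hxbar).antisymm
    (subdiff_add_subdiff_subset φ₁ φ₂ xbar)

/-- subdifferential sum rule for proper convex functions. -/
theorem subdifferential_sum_rule {X : Type*} [AddCommGroup X] [Module ℝ X]
    (φ₁ φ₂ : X → EReal)
    (hbot₁ : ∀ x, φ₁ x ≠ ⊥) (hbot₂ : ∀ x, φ₂ x ≠ ⊥)
    (hproper₁ : (fDom φ₁).Nonempty) (hproper₂ : (fDom φ₂).Nonempty)
    (hconv₁ : ConvexFun φ₁) (hconv₂ : ConvexFun φ₂)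
    (hsolid : (algCore (epi φ₁)).Nonempty)
    (hqc : (algCore (fDom φ₁) ∩ fDom φ₂).Nonempty)
    (xbar : X) (hxbar : xbar ∈ fDom φ₁ ∩ fDom φ₂) :
    subdiff (fun x => φ₁ x + φ₂ x) xbar = subdiff φ₁ xbar + subdiff φ₂ xbar :=
  subdifferential_sum_rule_general φ₁ φ₂ hbot₁ hbot₂ hconv₁ hconv₂ hqc xbar hxbar
end

section
/- Let A : X → Y be a linear operator between real vector spaces and let φ : Y → ℝ ∪ {+∞} be a proper convex function whose epigraph is core-solid. Assume that the range of A contains a point of core(dom(φ)). Then for any x̄ ∈ X with ȳ := A(x̄) ∈ dom(φ) one has the chain rule ∂(φ ∘ A)(x̄) = A*(∂φ(ȳ)) := {A*g : g ∈ ∂φ(ȳ)}, where A*g is the linear function on X defined by (A*g)(x) := g(Ax). -/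
open Pointwise Set

/-!
For `f ∈ ∂(φ ∘ A)(x̄)` consider the set `C` of pairs `(v, r)` with
`φ (ȳ + v + A x) ≤ φ ȳ + f x + r` for some `x`. It is convex, the subgradient inequality for `f`
says that it meets the vertical line over `0` only in `[0, ∞)`, and its projection to `Y`
absorbs every direction because `A x₀ ∈ core (dom φ)`. The M. Riesz extension theorem then gives
a nonvertical supporting hyperplane of `C` at the origin, i.e. a linear `g` with `g v ≤ r` on `C`.
Testing it on `(A x, f x)` gives `g ∘ A = f`, and on `(y - ȳ, φ y - φ ȳ)` gives `g ∈ ∂φ(ȳ)`.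
-/

theorem Convex.exists_linearMap_fst_le_snd {Y : Type*} [AddCommGroup Y] [Module ℝ Y]
    {C : Set (Y × ℝ)} (hC : Convex ℝ C) (hC₀ : (0 : Y × ℝ) ∈ C)
    (hvert : ∀ r : ℝ, ((0 : Y), r) ∈ C → 0 ≤ r)
    (habs : ∀ v : Y, ∃ t : ℝ, 0 < t ∧ t • v ∈ Prod.fst '' C) :
    ∃ g : Y →ₗ[ℝ] ℝ, ∀ p ∈ C, g p.1 ≤ p.2 := by
  -- Extend `(0, r) ↦ r` to a functional `ψ` that is nonnegative on the cone generated by `C`.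
  have hsupport := riesz_extension
    ((ConvexCone.hull ℝ C).toPointedCone (ConvexCone.subset_hull hC₀))
    ((LinearMap.snd ℝ Y ℝ).toPMap (LinearMap.ker (LinearMap.fst ℝ Y ℝ))) ?nonneg ?dense
  case nonneg =>
    rintro ⟨⟨y, r⟩, hy : y = 0⟩ hx
    subst hy
    obtain ⟨s, hs, hsx⟩ := (ConvexCone.mem_hull_of_convex hC).1 hx
    rw [mem_smul_set_iff_inv_smul_mem₀ hs.ne', Prod.smul_mk, smul_zero, smul_eq_mul] at hsx
    exact nonneg_of_mul_nonneg_right (hvert _ hsx) (inv_pos.2 hs)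
  case dense =>
    rintro ⟨v, q⟩
    obtain ⟨t, ht, ⟨_, r⟩, hp, rfl⟩ := habs v
    refine ⟨⟨(0, t⁻¹ * r - q), rfl⟩, ?_⟩
    have hshift : ((0 : Y), t⁻¹ * r - q) + (v, q) = t⁻¹ • (t • v, r) := by
      ext <;> simp [smul_smul, ht.ne']
    rw [hshift]
    exact (ConvexCone.hull ℝ C).smul_mem (inv_pos.2 ht) (ConvexCone.subset_hull hp)
  obtain ⟨ψ, hψ_vert, hψ_nonneg⟩ := hsupport
  refine ⟨-ψ.comp (LinearMap.inl ℝ Y ℝ), fun ⟨y, r⟩ hp => ?_⟩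
  have hψ_yr : 0 ≤ ψ (y, r) := hψ_nonneg _ (ConvexCone.subset_hull hp)
  have hψ_r : ψ (0, r) = r := hψ_vert ⟨(0, r), rfl⟩
  have hψ_split : ψ (y, r) = ψ (y, 0) + ψ (0, r) := by
    rw [← map_add, Prod.mk_add_mk, add_zero, zero_add]
  simp only [LinearMap.neg_apply, LinearMap.comp_apply, LinearMap.inl_apply]
  linarith

theorem ConvexFun.convex_epi {X : Type*} [AddCommGroup X] [Module ℝ X] {φ : X → EReal}
    (hφ : ConvexFun φ) : Convex ℝ (epi φ) := by
  rintro ⟨x, r⟩ (hx : φ x ≤ r) ⟨y, s⟩ (hy : φ y ≤ s) a b ha hb hab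
  obtain rfl : b = 1 - a := by linarith
  show φ (a • x + (1 - a) • y) ≤ ((a * r + (1 - a) * s : ℝ) : EReal)
  calc φ (a • x + (1 - a) • y) ≤ (a : EReal) * φ x + ((1 - a : ℝ) : EReal) * φ y :=
        hφ x y a ha (by linarith)
    _ ≤ (a : EReal) * r + ((1 - a : ℝ) : EReal) * s := by gcongr
    _ = ((a * r + (1 - a) * s : ℝ) : EReal) := by norm_cast

section Marginal

variable {X Y : Type*} [AddCommGroup X] [Module ℝ X] [AddCommGroup Y] [Module ℝ Y]

/-- Up to boundary points, the epigraph of the marginal function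
`v ↦ ⨅ x, φ (y₀ + v + A x) - c - f x`. -/
def marginalEpi (φ : Y → EReal) (A : X →ₗ[ℝ] Y) (f : X →ₗ[ℝ] ℝ) (y₀ : Y) (c : ℝ) :
    Set (Y × ℝ) :=
  {p | ∃ x, (y₀ + p.1 + A x, c + f x + p.2) ∈ epi φ}

theorem ConvexFun.convex_marginalEpi {φ : Y → EReal} (hφ : ConvexFun φ) (A : X →ₗ[ℝ] Y)
    (f : X →ₗ[ℝ] ℝ) (y₀ : Y) (c : ℝ) : Convex ℝ (marginalEpi φ A f y₀ c) := by
  rintro ⟨y₁, r₁⟩ ⟨x₁, h₁⟩ ⟨y₂, r₂⟩ ⟨x₂, h₂⟩ a b ha hb hab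
  refine ⟨a • x₁ + b • x₂, ?_⟩
  convert hφ.convex_epi h₁ h₂ ha hb hab using 1
  obtain rfl : b = 1 - a := by linarith
  ext
  · simp only [Prod.smul_mk, Prod.mk_add_mk, map_add, map_smul]
    module
  · simp only [Prod.smul_mk, Prod.mk_add_mk, map_add, map_smul, smul_eq_mul]
    ring

variable {A : X →ₗ[ℝ] Y} {φ : Y → EReal} {xbar : X} {c : ℝ} {f : X →ₗ[ℝ] ℝ}

theorem exists_linearMap_le_on_marginalEpi (hconv : ConvexFun φ)
    (hrange : ∃ x : X, A x ∈ algCore (fDom φ)) (hc : φ (A xbar) = c)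
    (hf : f ∈ subdiff (fun x => φ (A x)) xbar) :
    ∃ g : Y →ₗ[ℝ] ℝ, ∀ p ∈ marginalEpi φ A f (A xbar) c, g p.1 ≤ p.2 := by
  obtain ⟨x₀, -, hx₀⟩ := hrange
  refine (hconv.convex_marginalEpi A f (A xbar) c).exists_linearMap_fst_le_snd
    ⟨0, by simp [epi, hc]⟩ ?_ ?_
  · rintro r ⟨x, hx : φ (A xbar + 0 + A x) ≤ _⟩
    have hfx : (c : EReal) + f x ≤ φ (A xbar + A x) := by
      simpa [hc] using hf (xbar + x)
    rw [add_zero] at hx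
    have hcr := hfx.trans hx
    norm_cast at hcr
    linarith
  · intro v
    obtain ⟨δ, hδ, hcore⟩ := hx₀ v
    have hdom : φ (A x₀ + (δ / 2) • v) ≠ ⊤ :=
      (hcore (δ / 2) (by rw [abs_of_pos (half_pos hδ)]; linarith)).ne
    refine ⟨δ / 2, half_pos hδ,
      ((δ / 2) • v, (φ (A x₀ + (δ / 2) • v)).toReal - c - f (x₀ - xbar)), ⟨x₀ - xbar, ?_⟩, rfl⟩
    have hpt : A xbar + (δ / 2) • v + A (x₀ - xbar) = A x₀ + (δ / 2) • v := by
      rw [map_sub]; abel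
    simp only [epi, mem_ofPred_eq, hpt]
    convert EReal.le_coe_toReal hdom using 2
    ring

theorem exists_mem_subdiff_comp_eq (hbot : ∀ y, φ y ≠ ⊥) (hconv : ConvexFun φ)
    (hrange : ∃ x : X, A x ∈ algCore (fDom φ)) (hxbar : A xbar ∈ fDom φ)
    (hf : f ∈ subdiff (fun x => φ (A x)) xbar) :
    ∃ g ∈ subdiff φ (A xbar), g ∘ₗ A = f := by
  obtain ⟨c, hc⟩ : ∃ c : ℝ, φ (A xbar) = c := ⟨_, (EReal.coe_toReal hxbar.ne (hbot _)).symm⟩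
  obtain ⟨g, hg⟩ := exists_linearMap_le_on_marginalEpi hconv hrange hc hf
  have hgA : ∀ x, g (A x) ≤ f x := fun x => hg (A x, f x) ⟨-x, by simp [epi, hc]⟩
  refine ⟨g, fun y => ?_, LinearMap.ext fun x => le_antisymm (hgA x) (by simpa using hgA (-x))⟩
  rw [hc]
  by_cases hy : φ y = ⊤
  · simp [hy]
  rw [← EReal.coe_toReal hy (hbot y)]
  have hgy := hg (y - A xbar, (φ y).toReal - c) ⟨0, by simp [epi, EReal.coe_toReal hy (hbot y)]⟩
  exact_mod_cast (by linarith : c + g (y - A xbar) ≤ (φ y).toReal)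

end Marginal

theorem subdifferential_chain_rule_general {X Y : Type*} [AddCommGroup X] [Module ℝ X]
    [AddCommGroup Y] [Module ℝ Y] (A : X →ₗ[ℝ] Y) (φ : Y → EReal)
    (hbot : ∀ y, φ y ≠ ⊥) (hconv : ConvexFun φ)
    (hrange : ∃ x : X, A x ∈ algCore (fDom φ))
    (xbar : X) (hxbar : A xbar ∈ fDom φ) :
    subdiff (fun x => φ (A x)) xbar =
      (fun g : Y →ₗ[ℝ] ℝ => g ∘ₗ A) '' subdiff φ (A xbar) := by
  ext f
  constructor
  · exact exists_mem_subdiff_comp_eq hbot hconv hrange hxbar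
  · rintro ⟨g, hg, rfl⟩ x
    simpa [map_sub] using hg (A x)

/-- subdifferential chain rule for the composition of a proper convex
function with a linear operator. -/
theorem subdifferential_chain_rule {X Y : Type*} [AddCommGroup X] [Module ℝ X]
    [AddCommGroup Y] [Module ℝ Y] (A : X →ₗ[ℝ] Y) (φ : Y → EReal)
    (hbot : ∀ y, φ y ≠ ⊥) (hproper : (fDom φ).Nonempty) (hconv : ConvexFun φ)
    (hsolid : (algCore (epi φ)).Nonempty)
    (hrange : ∃ x : X, A x ∈ algCore (fDom φ))
    (xbar : X) (hxbar : A xbar ∈ fDom φ) :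
    subdiff (fun x => φ (A x)) xbar =
      (fun g : Y →ₗ[ℝ] ℝ => g ∘ₗ A) '' subdiff φ (A xbar) :=
  subdifferential_chain_rule_general A φ hbot hconv hrange xbar hxbar
end
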